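/- Under the hypotheses of the previous theorem (P_1,...,P_{n−1} packed into the unit square, n ≥ 1000), the total area actually used by the resulting packing is less than 1 + (2/n)(ln 2 + 1/(2n)). -/

import Mathlib

open Set

/-- The open axis-aligned rectangle with lower-left corner `p`, width `w` and height `h`. -/
def openRect (p : ℝ × ℝ) (w h : ℝ) : Set (ℝ × ℝ) :=
  Set.Ioo p.1 (p.1 + w) ×ˢ Set.Ioo p.2 (p.2 + h)

/-- The rectangles of dimensions `w i × h i` can be packed into the region `R`:
axis-aligned placements (translations, and 90° rotations swapping the two sides, allowed)
with pairwise disjoint interiors, all contained in `R`. -/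
def RectsPackIn {ι : Type*} (w h : ι → ℝ) (R : Set (ℝ × ℝ)) : Prop :=
  ∃ (pos : ι → ℝ × ℝ) (rot : ι → Bool),
    (∀ i, openRect (pos i) (if rot i then h i else w i) (if rot i then w i else h i) ⊆ R) ∧
    ∀ i j, i ≠ j →
      Disjoint (openRect (pos i) (if rot i then h i else w i) (if rot i then w i else h i))
        (openRect (pos j) (if rot j then h j else w j) (if rot j then w j else h j))


lemma openRect_subset_prod {p : ℝ × ℝ} {w h a b c d : ℝ}
    (h1 : a ≤ p.1) (h2 : p.1 + w ≤ b) (h3 : c ≤ p.2) (h4 : p.2 + h ≤ d) :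
    openRect p w h ⊆ Set.Icc a b ×ˢ Set.Icc c d := by
  rintro ⟨x, y⟩ ⟨hx, hy⟩
  exact ⟨⟨le_of_lt (lt_of_le_of_lt h1 hx.1), le_of_lt (lt_of_lt_of_le hx.2 h2)⟩,
    ⟨le_of_lt (lt_of_le_of_lt h3 hy.1), le_of_lt (lt_of_lt_of_le hy.2 h4)⟩⟩

lemma openRect_disjoint_x {p q : ℝ × ℝ} {w1 h1 w2 h2 : ℝ} (h : p.1 + w1 ≤ q.1) :
    Disjoint (openRect p w1 h1) (openRect q w2 h2) := by
  rw [Set.disjoint_left]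
  rintro ⟨x, y⟩ ⟨hx, -⟩ ⟨hx', -⟩
  exact absurd (hx.2.trans_le (h.trans hx'.1.le)) (lt_irrefl x)

lemma openRect_disjoint_y {p q : ℝ × ℝ} {w1 h1 w2 h2 : ℝ} (h : p.2 + h1 ≤ q.2) :
    Disjoint (openRect p w1 h1) (openRect q w2 h2) := by
  rw [Set.disjoint_left]
  rintro ⟨x, y⟩ ⟨-, hy⟩ ⟨-, hy'⟩
  exact absurd (hy.2.trans_le (h.trans hy'.1.le)) (lt_irrefl y)

lemma openRect_lt_of_subset_unit {q : ℝ × ℝ} {w h : ℝ}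
    (hsub : openRect q w h ⊆ Set.Icc 0 1 ×ˢ Set.Icc 0 1) {p : ℝ × ℝ}
    (hp : p ∈ openRect q w h) : p.1 < 1 ∧ p.2 < 1 := by
  obtain ⟨hx, hy⟩ := hp
  have h1 : ((p.1 + (q.1 + w)) / 2, p.2) ∈ openRect q w h :=
    ⟨⟨by simp only; linarith [hx.1, hx.2], by simp only; linarith [hx.2]⟩, by simpa using hy⟩
  have h2 : (p.1, (p.2 + (q.2 + h)) / 2) ∈ openRect q w h :=
    ⟨by simpa using hx, ⟨by simp only; linarith [hy.1, hy.2], by simp only; linarith [hy.2]⟩⟩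
  have b1 := (hsub h1).1.2
  have b2 := (hsub h2).2.2
  simp only at b1 b2
  constructor <;> [linarith [hx.2]; linarith [hy.2]]

lemma volume_openRect (p : ℝ × ℝ) (w h : ℝ) :
    MeasureTheory.volume (openRect p w h) = ENNReal.ofReal w * ENNReal.ofReal h := by
  simp [openRect, MeasureTheory.Measure.volume_eq_prod, MeasureTheory.Measure.prod_prod,
    Real.volume_Ioo]

noncomputable def Hsum (m i : ℕ) : ℝ := ∑ j ∈ Finset.Ico m i, (1 : ℝ) / j

lemma Hsum_nonneg (m i : ℕ) : 0 ≤ Hsum m i :=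
  Finset.sum_nonneg fun j _ => by positivity

lemma Hsum_succ {m i : ℕ} (h : m ≤ i) : Hsum m (i + 1) = Hsum m i + 1 / i :=
  Finset.sum_Ico_succ_top h _

lemma Hsum_mono (m : ℕ) {i i' : ℕ} (h : i ≤ i') : Hsum m i ≤ Hsum m i' :=
  Finset.sum_le_sum_of_subset_of_nonneg (Finset.Ico_subset_Ico le_rfl h)
    (fun j _ _ => by positivity)

lemma Hsum_le_one {m i : ℕ} (hm : 1 ≤ m) (hi : i < 2 * m) : Hsum m (i + 1) ≤ 1 := by
  have hmR : (0 : ℝ) < m := by exact_mod_cast hm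
  have hb : ∀ j ∈ Finset.Ico m (i + 1), (1 : ℝ) / j ≤ 1 / m := by
    intro j hj
    rw [Finset.mem_Ico] at hj
    exact one_div_le_one_div_of_le hmR (by exact_mod_cast hj.1)
  calc Hsum m (i + 1) ≤ (Finset.Ico m (i + 1)).card • ((1 : ℝ) / m) :=
        Finset.sum_le_card_nsmul _ _ _ hb
    _ = ((i + 1 - m : ℕ) : ℝ) * (1 / m) := by rw [Nat.card_Ico, nsmul_eq_mul]
    _ ≤ (m : ℝ) * (1 / m) := by
        apply mul_le_mul_of_nonneg_right _ (by positivity)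
        exact_mod_cast Nat.sub_le_of_le_add (by omega)
    _ = 1 := by field_simp

noncomputable def scol (n k : ℕ) : ℝ := ∑ l ∈ Finset.Ico 1 k, (1 : ℝ) / (n * 2 ^ l : ℕ)

lemma scol_succ {n k : ℕ} (h : 1 ≤ k) :
    scol n (k + 1) = scol n k + 1 / (n * 2 ^ k : ℕ) :=
  Finset.sum_Ico_succ_top h _

lemma scol_eq {n : ℕ} (hn : 0 < n) : ∀ {k : ℕ}, 1 ≤ k →
    scol n k = 1 / n - 2 / (n * 2 ^ k : ℕ) := by
  have hnR : (0 : ℝ) < n := by exact_mod_cast hn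
  intro k hk
  induction k with
  | zero => omega
  | succ k ih =>
    rcases Nat.eq_or_lt_of_le hk with h1 | h1
    · simp [scol, ← h1]
      push_cast
      field_simp
      ring
    · have hk1 : 1 ≤ k := by omega
      rw [scol_succ hk1, ih hk1]
      push_cast
      have h2 : (2 : ℝ) ^ k ≠ 0 := by positivity
      field_simp
      ring

lemma scol_nonneg {n : ℕ} (hn : 0 < n) {k : ℕ} (hk : 1 ≤ k) : 0 ≤ scol n k :=
  Finset.sum_nonneg fun j _ => by positivity

lemma scol_le {n : ℕ} (hn : 0 < n) {k : ℕ} (hk : 1 ≤ k) : scol n k ≤ 1 / n := by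
  rw [scol_eq hn hk]
  have : (0:ℝ) ≤ 2 / (n * 2 ^ k : ℕ) := by positivity
  linarith

lemma scol_mono (n : ℕ) {k k' : ℕ} (h : k ≤ k') : scol n k ≤ scol n k' :=
  Finset.sum_le_sum_of_subset_of_nonneg (Finset.Ico_subset_Ico le_rfl h)
    (fun j _ _ => by positivity)


lemma volume_rect_rot (p : ℝ × ℝ) (b : Bool) (w h : ℝ) :
    MeasureTheory.volume (openRect p (if b then h else w) (if b then w else h)) =
      ENNReal.ofReal w * ENNReal.ofReal h := by
  cases b <;> simp [volume_openRect, mul_comm]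

lemma sum_ite_tail {n : ℕ} (hn : 0 < n) (N : ℕ) :
    ∑ j ∈ Finset.range N, (if n ≤ j then (1 : ℝ) / j - 1 / ((j : ℝ) + 1) else 0) ≤ 1 / n := by
  have key : ∀ M, n ≤ M →
      ∑ j ∈ Finset.range M, (if n ≤ j then (1 : ℝ) / j - 1 / ((j : ℝ) + 1) else 0)
        = 1 / n - 1 / M := by
    intro M hM
    induction M, hM using Nat.le_induction with
    | base =>
        have h0 : ∑ j ∈ Finset.range n, (if n ≤ j then (1 : ℝ) / j - 1 / ((j : ℝ) + 1) else 0)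
            = 0 :=
          Finset.sum_eq_zero fun j hj => if_neg (by rw [Finset.mem_range] at hj; omega)
        rw [h0]; ring
    | succ M hM ih =>
        rw [Finset.sum_range_succ, ih, if_pos hM]
        push_cast
        ring
  rcases le_or_gt n N with h | h
  · rw [key N h]
    have hN : (0 : ℝ) ≤ 1 / N := by positivity
    linarith
  · rw [Finset.sum_eq_zero fun j hj => if_neg (by rw [Finset.mem_range] at hj; omega)]
    positivity

lemma tail_g_nonneg {n : ℕ} (hn : 0 < n) (j : ℕ) : 0 ≤ (if n ≤ j then (1 : ℝ) / j - 1 / ((j : ℝ) + 1) else 0) := by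
  split
  · rename_i hj
    rcases Nat.eq_zero_or_pos j with h0 | h0
    · subst h0; omega
    · have hjR : (0 : ℝ) < j := by exact_mod_cast h0
      have : 1 / ((j : ℝ) + 1) ≤ 1 / j := one_div_le_one_div_of_le hjR (by linarith)
      linarith
  · exact le_refl 0

lemma tail_tsum_le {n : ℕ} (hn : 0 < n) :
    ∑' j : ℕ, ENNReal.ofReal (if n ≤ j then (1 : ℝ) / j - 1 / ((j : ℝ) + 1) else 0)
      ≤ ENNReal.ofReal (1 / n) := by
  rw [ENNReal.tsum_eq_iSup_sum]
  refine iSup_le fun s => ?_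
  set N := max n (s.sup id + 1) with hN
  have hsub : s ⊆ Finset.range N := by
    intro j hj
    refine Finset.mem_range.2 ?_
    have := Finset.le_sup (f := id) hj
    simp only [id] at this
    omega
  calc ∑ j ∈ s, ENNReal.ofReal (if n ≤ j then (1 : ℝ) / j - 1 / ((j : ℝ) + 1) else 0)
      ≤ ∑ j ∈ Finset.range N, ENNReal.ofReal (if n ≤ j then (1 : ℝ) / j - 1 / ((j : ℝ) + 1) else 0) :=
        Finset.sum_le_sum_of_subset hsub
    _ = ENNReal.ofReal (∑ j ∈ Finset.range N,
          (if n ≤ j then (1 : ℝ) / j - 1 / ((j : ℝ) + 1) else 0)) :=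
        (ENNReal.ofReal_sum_of_nonneg fun j _ => tail_g_nonneg hn j).symm
    _ ≤ ENNReal.ofReal (1 / n) := ENNReal.ofReal_le_ofReal (sum_ite_tail hn N)

/-- Under the hypotheses of the theorem (`P_1,…,P_{n-1}` packed into the unit square,
`n ≥ 1000`), the resulting packing of all the rectangles lies in a region of area less than
`1 + (2/n)(ln 2 + 1/(2n))` (inside the square of side `1 + 1/n`). -/
theorem packing_area_bound (n : ℕ) (hn : 1000 ≤ n)
    (hpack : RectsPackIn (ι := {i : ℕ // 1 ≤ i ∧ i < n})
      (fun i => (1 : ℝ) / (i : ℕ)) (fun i => (1 : ℝ) / ((i : ℕ) + 1))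
      (Set.Icc 0 1 ×ˢ Set.Icc 0 1)) :
    ∃ S : Set (ℝ × ℝ),
      S ⊆ Set.Icc 0 (1 + 1 / (n : ℝ)) ×ˢ Set.Icc 0 (1 + 1 / (n : ℝ)) ∧
      RectsPackIn (ι := {i : ℕ // 1 ≤ i})
        (fun i => (1 : ℝ) / (i : ℕ)) (fun i => (1 : ℝ) / ((i : ℕ) + 1)) S ∧
      MeasureTheory.volume S <
        ENNReal.ofReal (1 + 2 / (n : ℝ) * (Real.log 2 + 1 / (2 * (n : ℝ)))) := by
  classical
  obtain ⟨pos0, rot0, hsub0, hdisj0⟩ := hpack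
  have hn0 : 0 < n := by omega
  have hnR : (0 : ℝ) < n := by exact_mod_cast hn0
  set K : ℕ → ℕ := fun i => Nat.log 2 (i / n) with hKdef
  have hK : ∀ i : ℕ, n ≤ i → n * 2 ^ K i ≤ i ∧ i < 2 * (n * 2 ^ K i) := by
    intro i hi
    have h0 : 1 ≤ i / n := (Nat.one_le_div_iff hn0).2 hi
    have a := Nat.pow_log_le_self 2 (by omega : i / n ≠ 0)
    have b := Nat.lt_pow_succ_log_self (by norm_num : 1 < 2) (i / n)
    have a' : 2 ^ K i * n ≤ i := (Nat.le_div_iff_mul_le hn0).1 a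
    have b' : i < 2 ^ (K i + 1) * n := (Nat.div_lt_iff_lt_mul hn0).1 b
    have e : 2 ^ (K i + 1) * n = 2 * (n * 2 ^ K i) := by ring
    constructor
    · rw [mul_comm]; exact a'
    · omega
  set pos1 : {i : ℕ // 1 ≤ i} → ℝ × ℝ := fun i =>
    if h : (i : ℕ) < n then pos0 ⟨i, i.2, h⟩
    else if K i = 0 then (Hsum n i, 1)
    else (1 + scol n (K i), Hsum (n * 2 ^ K i) i) with hpos1def
  set rot1 : {i : ℕ // 1 ≤ i} → Bool := fun i =>
    if h : (i : ℕ) < n then rot0 ⟨i, i.2, h⟩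
    else if K i = 0 then false else true with hrot1def
  set R1 : {i : ℕ // 1 ≤ i} → Set (ℝ × ℝ) := fun i =>
    openRect (pos1 i) (if rot1 i then (1 : ℝ) / ((i : ℕ) + 1) else (1 : ℝ) / (i : ℕ))
      (if rot1 i then (1 : ℝ) / (i : ℕ) else (1 : ℝ) / ((i : ℕ) + 1)) with hR1def
  have hRlt : ∀ (i : {i : ℕ // 1 ≤ i}) (h : (i : ℕ) < n),
      R1 i = openRect (pos0 ⟨i.1, i.2, h⟩)
        (if rot0 ⟨i.1, i.2, h⟩ then (1 : ℝ) / ((i : ℕ) + 1) else (1 : ℝ) / (i : ℕ))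
        (if rot0 ⟨i.1, i.2, h⟩ then (1 : ℝ) / (i : ℕ) else (1 : ℝ) / ((i : ℕ) + 1)) := by
    intro i h
    simp only [hR1def, hpos1def, hrot1def, dif_pos h]
  have hR0 : ∀ (i : {i : ℕ // 1 ≤ i}), n ≤ i.1 → K i.1 = 0 →
      R1 i = openRect ((Hsum n i.1, 1) : ℝ × ℝ) ((1 : ℝ) / (i : ℕ)) ((1 : ℝ) / ((i : ℕ) + 1)) := by
    intro i h h0
    simp only [hR1def, hpos1def, hrot1def, dif_neg (not_lt.2 h), if_pos h0, Bool.false_eq_true,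
      if_false]
  have hRk : ∀ (i : {i : ℕ // 1 ≤ i}), n ≤ i.1 → K i.1 ≠ 0 →
      R1 i = openRect ((1 + scol n (K i.1), Hsum (n * 2 ^ K i.1) i.1) : ℝ × ℝ)
        ((1 : ℝ) / ((i : ℕ) + 1)) ((1 : ℝ) / (i : ℕ)) := by
    intro i h h0
    simp only [hR1def, hpos1def, hrot1def, dif_neg (not_lt.2 h), if_neg h0, if_true]
  
  have hTail0sub : ∀ (i : {i : ℕ // 1 ≤ i}), n ≤ i.1 → K i.1 = 0 →
      R1 i ⊆ Set.Icc 0 1 ×ˢ Set.Icc 1 (1 + 1 / (n : ℝ)) := by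
    intro i h h0
    obtain ⟨hk1, hk2⟩ := hK i.1 h
    rw [h0, pow_zero, mul_one] at hk2
    rw [hR0 i h h0]
    have hs := Hsum_succ (show n ≤ i.1 from h)
    have hle := Hsum_le_one (show 1 ≤ n by omega) hk2
    have hcast : (n : ℝ) ≤ (i.1 : ℝ) + 1 := by
      have : (n : ℝ) ≤ (i.1 : ℝ) := by exact_mod_cast h
      linarith
    have hd : 1 / ((i.1 : ℝ) + 1) ≤ 1 / n := one_div_le_one_div_of_le hnR hcast
    exact openRect_subset_prod (Hsum_nonneg _ _) (by simp only; linarith)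
      (by simp only; linarith) (by simp only; linarith)
  have hTailksub : ∀ (i : {i : ℕ // 1 ≤ i}), n ≤ i.1 → K i.1 ≠ 0 →
      R1 i ⊆ Set.Icc 1 (1 + 1 / (n : ℝ)) ×ˢ Set.Icc 0 1 := by
    intro i h h0
    obtain ⟨hk1, hk2⟩ := hK i.1 h
    rw [hRk i h h0]
    have hkk : 1 ≤ K i.1 := Nat.one_le_iff_ne_zero.2 h0
    have hm0 : 0 < n * 2 ^ K i.1 := by positivity
    have hm1 : 1 ≤ n * 2 ^ K i.1 := hm0
    have hmR : (0 : ℝ) < ((n * 2 ^ K i.1 : ℕ) : ℝ) := by exact_mod_cast hm0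
    have hcast : ((n * 2 ^ K i.1 : ℕ) : ℝ) ≤ (i.1 : ℝ) + 1 := by
      have : ((n * 2 ^ K i.1 : ℕ) : ℝ) ≤ (i.1 : ℝ) := by exact_mod_cast hk1
      linarith
    have hd : 1 / ((i.1 : ℝ) + 1) ≤ 1 / ((n * 2 ^ K i.1 : ℕ) : ℝ) :=
      one_div_le_one_div_of_le hmR hcast
    have hsc := scol_succ (n := n) hkk
    have hsc2 := scol_le hn0 (show 1 ≤ K i.1 + 1 by omega)
    have hs := Hsum_succ hk1
    have hle := Hsum_le_one hm1 hk2
    have hsn := scol_nonneg hn0 hkk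
    exact openRect_subset_prod (by simp only; linarith) (by simp only; linarith)
      (by simp only; exact Hsum_nonneg _ _) (by simp only; linarith)
  
  set S : Set (ℝ × ℝ) := (Set.Icc 0 1 ×ˢ Set.Icc 0 1) ∪
    ⋃ (j : ℕ) (_ : n ≤ j) (h1 : 1 ≤ j), R1 ⟨j, h1⟩ with hSdef
  -- disjointness of the tail rectangles and old rectangles
  have hOldTail : ∀ (i j : {i : ℕ // 1 ≤ i}), (i : ℕ) < n → n ≤ (j : ℕ) →
      Disjoint (R1 i) (R1 j) := by
    intro i j hi hj
    rw [Set.disjoint_left]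
    intro p hpi hpj
    rw [hRlt i hi] at hpi
    have hlt := openRect_lt_of_subset_unit (hsub0 ⟨i.1, i.2, hi⟩) hpi
    by_cases h0 : K j.1 = 0
    · have := hTail0sub j hj h0 hpj
      have h2 := this.2.1
      linarith [hlt.2]
    · have := hTailksub j hj h0 hpj
      have h2 := this.1.1
      linarith [hlt.1]
  have hTT : ∀ (i j : {i : ℕ // 1 ≤ i}), n ≤ (i : ℕ) → n ≤ (j : ℕ) →
      (K i.1 < K j.1 ∨ (K i.1 = K j.1 ∧ (i : ℕ) < (j : ℕ))) →
      Disjoint (R1 i) (R1 j) := by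
    intro i j hi hj hcase
    obtain ⟨hki1, hki2⟩ := hK i.1 hi
    obtain ⟨hkj1, hkj2⟩ := hK j.1 hj
    rcases hcase with hlt | ⟨heq, hij⟩
    · have hj0 : K j.1 ≠ 0 := by omega
      rw [hRk j hj hj0]
      have hkk : 1 ≤ K j.1 := Nat.one_le_iff_ne_zero.2 hj0
      by_cases h0 : K i.1 = 0
      · rw [hR0 i hi h0]
        apply openRect_disjoint_x
        simp only
        rw [h0, pow_zero, mul_one] at hki2
        have hs := Hsum_succ (show n ≤ i.1 from hi)
        have hle := Hsum_le_one (show 1 ≤ n by omega) hki2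
        have hsn := scol_nonneg hn0 hkk
        linarith
      · rw [hRk i hi h0]
        apply openRect_disjoint_x
        simp only
        have hki : 1 ≤ K i.1 := Nat.one_le_iff_ne_zero.2 h0
        have hm0 : 0 < n * 2 ^ K i.1 := by positivity
        have hmR : (0 : ℝ) < ((n * 2 ^ K i.1 : ℕ) : ℝ) := by exact_mod_cast hm0
        have hcast : ((n * 2 ^ K i.1 : ℕ) : ℝ) ≤ (i.1 : ℝ) + 1 := by
          have : ((n * 2 ^ K i.1 : ℕ) : ℝ) ≤ (i.1 : ℝ) := by exact_mod_cast hki1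
          linarith
        have hd : 1 / ((i.1 : ℝ) + 1) ≤ 1 / ((n * 2 ^ K i.1 : ℕ) : ℝ) :=
          one_div_le_one_div_of_le hmR hcast
        have hsc := scol_succ (n := n) hki
        have hmono := scol_mono n (show K i.1 + 1 ≤ K j.1 by omega)
        linarith
    · by_cases h0 : K i.1 = 0
      · rw [hR0 i hi h0, hR0 j hj (heq ▸ h0)]
        apply openRect_disjoint_x
        simp only
        have hs := Hsum_succ (show n ≤ i.1 from hi)
        have hmono := Hsum_mono n (show i.1 + 1 ≤ j.1 from hij)
        linarith
      · rw [hRk i hi h0, hRk j hj (heq ▸ h0), ← heq]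
        apply openRect_disjoint_y
        simp only
        have hs := Hsum_succ hki1
        have hmono := Hsum_mono (n * 2 ^ K i.1) (show i.1 + 1 ≤ j.1 from hij)
        linarith
  have hmain : ∀ (i j : {i : ℕ // 1 ≤ i}), i ≠ j → Disjoint (R1 i) (R1 j) := by
    intro i j hne
    have hij : (i : ℕ) ≠ (j : ℕ) := fun h => hne (Subtype.ext h)
    by_cases hi : (i : ℕ) < n <;> by_cases hj : (j : ℕ) < n
    · rw [hRlt i hi, hRlt j hj]
      have hne' : (⟨i.1, i.2, hi⟩ : {i : ℕ // 1 ≤ i ∧ i < n}) ≠ ⟨j.1, j.2, hj⟩ :=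
        fun h => hij (congrArg (fun x : {i : ℕ // 1 ≤ i ∧ i < n} => x.val) h)
      exact hdisj0 _ _ hne'
    · exact hOldTail i j hi (not_lt.1 hj)
    · exact (hOldTail j i hj (not_lt.1 hi)).symm
    · have hi' := not_lt.1 hi
      have hj' := not_lt.1 hj
      rcases Nat.lt_trichotomy (K i.1) (K j.1) with h | h | h
      · exact hTT i j hi' hj' (Or.inl h)
      · rcases Nat.lt_trichotomy (i : ℕ) (j : ℕ) with h2 | h2 | h2
        · exact hTT i j hi' hj' (Or.inr ⟨h, h2⟩)
        · exact absurd h2 hij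
        · exact (hTT j i hj' hi' (Or.inr ⟨h.symm, h2⟩)).symm
      · exact (hTT j i hj' hi' (Or.inl h)).symm
  
  refine ⟨S, ?_, ⟨pos1, rot1, ?_, ?_⟩, ?_⟩
  · -- S inside the big square
    have h1n : (1 : ℝ) ≤ 1 + 1 / n := by
      have : (0 : ℝ) < 1 / n := by positivity
      linarith
    apply Set.union_subset
    · exact Set.prod_mono (Set.Icc_subset_Icc le_rfl h1n) (Set.Icc_subset_Icc le_rfl h1n)
    · refine Set.iUnion_subset fun j => Set.iUnion_subset fun hj => Set.iUnion_subset fun h1 => ?_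
      by_cases h0 : K j = 0
      · exact (hTail0sub ⟨j, h1⟩ hj h0).trans
          (Set.prod_mono (Set.Icc_subset_Icc le_rfl h1n)
            (Set.Icc_subset_Icc (by norm_num) le_rfl))
      · exact (hTailksub ⟨j, h1⟩ hj h0).trans
          (Set.prod_mono (Set.Icc_subset_Icc (by norm_num) le_rfl)
            (Set.Icc_subset_Icc le_rfl h1n))
  · -- containment
    intro i
    show R1 i ⊆ S
    by_cases h : (i : ℕ) < n
    · rw [hRlt i h]
      exact (hsub0 ⟨i.1, i.2, h⟩).trans Set.subset_union_left
    · refine subset_trans ?_ Set.subset_union_right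
      refine Set.subset_iUnion_of_subset i.1 ?_
      refine Set.subset_iUnion_of_subset (not_lt.1 h) ?_
      refine Set.subset_iUnion_of_subset i.2 ?_
      exact subset_rfl
  · -- disjointness
    exact fun i j h => hmain i j h
  · -- volume bound
    have hvol_sq :
        MeasureTheory.volume ((Set.Icc 0 1 ×ˢ Set.Icc 0 1 : Set (ℝ × ℝ))) = 1 := by
      rw [MeasureTheory.Measure.volume_eq_prod, MeasureTheory.Measure.prod_prod,
        Real.volume_Icc]
      norm_num
    have hTvol : ∀ j : ℕ, MeasureTheory.volume (⋃ (_ : n ≤ j) (h1 : 1 ≤ j), R1 ⟨j, h1⟩)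
        ≤ ENNReal.ofReal (if n ≤ j then (1 : ℝ) / j - 1 / ((j : ℝ) + 1) else 0) := by
      intro j
      by_cases hj : n ≤ j
      · have h1 : 1 ≤ j := by omega
        have hjR : (0 : ℝ) < j := by exact_mod_cast (by omega : 0 < j)
        have hsub : (⋃ (_ : n ≤ j) (h1 : 1 ≤ j), R1 ⟨j, h1⟩) ⊆ R1 ⟨j, h1⟩ :=
          Set.iUnion_subset fun _ => Set.iUnion_subset fun _ => subset_rfl
        have hv : MeasureTheory.volume (R1 ⟨j, h1⟩) =
            ENNReal.ofReal ((1 : ℝ) / j) * ENNReal.ofReal (1 / ((j : ℝ) + 1)) :=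
          volume_rect_rot _ _ _ _
        calc MeasureTheory.volume (⋃ (_ : n ≤ j) (h1 : 1 ≤ j), R1 ⟨j, h1⟩)
            ≤ MeasureTheory.volume (R1 ⟨j, h1⟩) := MeasureTheory.measure_mono hsub
          _ = ENNReal.ofReal ((1 : ℝ) / j) * ENNReal.ofReal (1 / ((j : ℝ) + 1)) := hv
          _ = ENNReal.ofReal ((1 : ℝ) / j * (1 / ((j : ℝ) + 1))) :=
              (ENNReal.ofReal_mul (by positivity)).symm
          _ ≤ ENNReal.ofReal (if n ≤ j then (1 : ℝ) / j - 1 / ((j : ℝ) + 1) else 0) := by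
              rw [if_pos hj]
              apply ENNReal.ofReal_le_ofReal
              have he : (1 : ℝ) / j * (1 / ((j : ℝ) + 1)) = 1 / j - 1 / ((j : ℝ) + 1) := by
                field_simp
                ring
              rw [he]
      · simp [hj]
    have hvol_U : MeasureTheory.volume (⋃ (j : ℕ) (_ : n ≤ j) (h1 : 1 ≤ j), R1 ⟨j, h1⟩)
        ≤ ENNReal.ofReal (1 / n) :=
      le_trans (MeasureTheory.measure_iUnion_le _) (le_trans (ENNReal.tsum_le_tsum hTvol) (tail_tsum_le hn0))
    have hbound : MeasureTheory.volume S ≤ ENNReal.ofReal (1 + 1 / n) := by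
      calc MeasureTheory.volume S
          ≤ MeasureTheory.volume ((Set.Icc 0 1 ×ˢ Set.Icc 0 1 : Set (ℝ × ℝ))) +
            MeasureTheory.volume (⋃ (j : ℕ) (_ : n ≤ j) (h1 : 1 ≤ j), R1 ⟨j, h1⟩) :=
            MeasureTheory.measure_union_le _ _
        _ ≤ 1 + ENNReal.ofReal (1 / n) := add_le_add (le_of_eq hvol_sq) hvol_U
        _ = ENNReal.ofReal (1 + 1 / n) := by
            rw [ENNReal.ofReal_add (by norm_num) (by positivity), ENNReal.ofReal_one]
    refine lt_of_le_of_lt hbound ?_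
    have hl2 : (0.6931471803 : ℝ) < Real.log 2 := Real.log_two_gt_d9
    have hkey : (1 : ℝ) < 2 * Real.log 2 := by nlinarith
    have hexp : 2 / (n : ℝ) * (Real.log 2 + 1 / (2 * n)) = 2 * Real.log 2 / n + 1 / n ^ 2 := by
      field_simp
    have h3 : 1 / (n : ℝ) < 2 * Real.log 2 / n := (div_lt_div_iff_of_pos_right hnR).2 hkey
    have h4 : (0 : ℝ) < 1 / (n : ℝ) ^ 2 := by positivity
    have h5 : (0 : ℝ) < 1 / (n : ℝ) := by positivity
    rw [ENNReal.ofReal_lt_ofReal_iff (by linarith)]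
    linarith
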